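/- arXiv:2412.08572 — 4 statements merged into one kernel-verified Lean document; each statement's English description precedes it below -/
import Mathlib

section
/- Let c be a job-scheduling instance with m machines and n jobs and let A be an allocation. Then A is proportionable (i.e., there exists a payment vector p : Fin m → ℝ such that the mechanism (A, p) is proportional) if and only if A is mean-efficient, i.e., Σ_{i ∈ Fin m} c_i(A_i) ≤ (1/m)·Σ_{i ∈ Fin m} c_i([n]). -/
open Finset

noncomputable section

/-- The cost to machine `i` of the bundle of jobs assigned to machine `k` under allocation `A`. -/
def bundleCost {m n : ℕ} (c : Fin m → Fin n → ℝ) (A : Fin n → Fin m) (i k : Fin m) : ℝ :=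
  ∑ j ∈ Finset.univ.filter (fun j => A j = k), c i j

/-- The total cost to machine `i` of all jobs, `c_i([n])`. -/
def rowSum {m n : ℕ} (c : Fin m → Fin n → ℝ) (i : Fin m) : ℝ :=
  ∑ j, c i j

lemma sum_bundleCost {m n : ℕ} (c : Fin m → Fin n → ℝ) (A : Fin n → Fin m) (i : Fin m) :
    ∑ k : Fin m, bundleCost c A i k = rowSum c i := by
  classical
  unfold bundleCost rowSum
  exact Finset.sum_fiberwise_of_maps_to (fun j _ => Finset.mem_univ (A j)) _

/-- An allocation is proportionable iff it is mean-efficient. -/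
theorem stmt_0 {m n : ℕ} (hm : 2 ≤ m) (hn : 2 ≤ n)
    (c : Fin m → Fin n → ℝ) (hc : ∀ i j, 0 ≤ c i j) (A : Fin n → Fin m) :
    (∃ p : Fin m → ℝ, ∀ i : Fin m,
        bundleCost c A i i - p i ≤ (1 / (m : ℝ)) * ∑ k : Fin m, (bundleCost c A i k - p k))
    ↔ ∑ i : Fin m, bundleCost c A i i ≤ (1 / (m : ℝ)) * ∑ i : Fin m, rowSum c i := by
  have hm0 : (0:ℝ) < (m:ℝ) := by exact_mod_cast Nat.lt_of_lt_of_le Nat.zero_lt_two hm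
  constructor
  · rintro ⟨p, hp⟩
    have hsum := Finset.sum_le_sum (s := Finset.univ) (fun i _ => hp i)
    simp only [Finset.sum_sub_distrib, sum_bundleCost] at hsum
    have hsum' : ∑ i : Fin m, bundleCost c A i i - ∑ i : Fin m, p i ≤
        (1 / (m:ℝ)) * ∑ i : Fin m, rowSum c i - ∑ i : Fin m, p i := by
      calc ∑ i : Fin m, bundleCost c A i i - ∑ i : Fin m, p i
          ≤ ∑ i : Fin m, (1 / (m:ℝ)) * (rowSum c i - ∑ k, p k) := by
            simpa [Finset.sum_sub_distrib, mul_sub, sum_bundleCost] using hsum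
        _ = (1 / (m:ℝ)) * ∑ i : Fin m, rowSum c i - ∑ i : Fin m, p i := by
            rw [← Finset.mul_sum, Finset.sum_sub_distrib, Finset.sum_const,
              Finset.card_univ, Fintype.card_fin, mul_sub]
            congr 1
            field_simp
            rw [nsmul_eq_mul]
    linarith
  · intro h
    refine ⟨fun i => bundleCost c A i i - (1 / (m:ℝ)) * rowSum c i, fun i => ?_⟩
    have hsp : ∑ k : Fin m, (bundleCost c A i k -
        (bundleCost c A k k - (1 / (m:ℝ)) * rowSum c k)) =
        rowSum c i - (∑ k : Fin m, bundleCost c A k k - (1/(m:ℝ)) * ∑ k, rowSum c k) := by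
      rw [Finset.sum_sub_distrib, sum_bundleCost, Finset.sum_sub_distrib, ← Finset.mul_sum]
    rw [hsp]
    have : (0:ℝ) ≤ (1/(m:ℝ)) * ((1/(m:ℝ)) * ∑ k, rowSum c k - ∑ k : Fin m, bundleCost c A k k) := by
      apply mul_nonneg (by positivity)
      linarith
    have hi : bundleCost c A i i - (bundleCost c A i i - (1 / (m:ℝ)) * rowSum c i)
        = (1/(m:ℝ)) * rowSum c i := by ring
    rw [hi, mul_sub]
    linarith
end
end

section
/- Let c be a job-scheduling instance with m machines and n jobs and let A be a mean-efficient allocation. Define payments p by p_i := c_i(A_i) − (1/m)·c_i([n]) for each machine i. Then Σ_{i ∈ Fin m} p_i ≤ 0, and the mechanism (A, p) is proportional, i.e., for every machine i, c_i(A_i) − p_i ≤ (1/m)·Σ_{k ∈ Fin m} (c_i(A_k) − p_k). -/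
/-! The payments leave each machine with net cost exactly `c_i([n]) / m`, and they sum to
`Σ c_i(A_i) − (1/m) Σ c_i([n]) ≤ 0` by mean efficiency. Since the bundles partition the jobs,
the proportional share on the right is `(c_i([n]) − Σ p) / m ≥ c_i([n]) / m`. -/

open Finset

noncomputable section

section Proportionality

variable {m n : ℕ} (c : Fin m → Fin n → ℝ) (A : Fin n → Fin m)

theorem sum_bundleCost_eq_rowSum (i : Fin m) : ∑ k, bundleCost c A i k = rowSum c i :=
  Finset.sum_fiberwise univ A (c i)

theorem bundleCost_sub_le_of_sum_nonpos (p : Fin m → ℝ) (hsum : ∑ k, p k ≤ 0) (i : Fin m)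
    (hshare : bundleCost c A i i - p i = (1 / (m : ℝ)) * rowSum c i) :
    bundleCost c A i i - p i ≤ (1 / (m : ℝ)) * ∑ k, (bundleCost c A i k - p k) := by
  rw [hshare, sum_sub_distrib, sum_bundleCost_eq_rowSum]
  exact mul_le_mul_of_nonneg_left (by linarith) (by positivity)

end Proportionality

theorem stmt_1_general {m n : ℕ}
    (c : Fin m → Fin n → ℝ) (A : Fin n → Fin m)
    (hME : ∑ i : Fin m, bundleCost c A i i ≤ (1 / (m : ℝ)) * ∑ i : Fin m, rowSum c i)
    (p : Fin m → ℝ)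
    (hp : ∀ i : Fin m, p i = bundleCost c A i i - (1 / (m : ℝ)) * rowSum c i) :
    (∑ i : Fin m, p i ≤ 0) ∧
    ∀ i : Fin m,
      bundleCost c A i i - p i ≤ (1 / (m : ℝ)) * ∑ k : Fin m, (bundleCost c A i k - p k) := by
  have hsum : ∑ i, p i ≤ 0 := by
    simp only [hp, sum_sub_distrib, ← mul_sum]
    linarith
  refine ⟨hsum, fun i => bundleCost_sub_le_of_sum_nonpos c A p hsum i ?_⟩
  rw [hp i]
  ring

/-- For a mean-efficient allocation, the natural payments sum to at most 0 and make
the mechanism proportional. -/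
theorem stmt_1 {m n : ℕ} (hm : 2 ≤ m) (hn : 2 ≤ n)
    (c : Fin m → Fin n → ℝ) (hc : ∀ i j, 0 ≤ c i j) (A : Fin n → Fin m)
    (hME : ∑ i : Fin m, bundleCost c A i i ≤ (1 / (m : ℝ)) * ∑ i : Fin m, rowSum c i)
    (p : Fin m → ℝ)
    (hp : ∀ i : Fin m, p i = bundleCost c A i i - (1 / (m : ℝ)) * rowSum c i) :
    (∑ i : Fin m, p i ≤ 0) ∧
    ∀ i : Fin m,
      bundleCost c A i i - p i ≤ (1 / (m : ℝ)) * ∑ k : Fin m, (bundleCost c A i k - p k) :=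
  stmt_1_general c A hME p hp
end
end

section
/- For every m ≥ 2, every n ≥ m, and every ε > 0, there exists a job-scheduling instance c with m machines and n jobs such that every proportionable allocation A of c has makespan strictly greater than (3/2 − ε)·OPT(c). Consequently, no proportional mechanism over general instances gives a (3/2 − ε)-approximation to the optimal makespan. -/
open Finset

noncomputable section

/-- The makespan of allocation `A`: the maximum cost of any machine. -/
def makespan {m n : ℕ} (hm : 0 < m) (c : Fin m → Fin n → ℝ) (A : Fin n → Fin m) : ℝ :=
  (Finset.univ : Finset (Fin m)).sup' ⟨⟨0, hm⟩, Finset.mem_univ _⟩ fun i => bundleCost c A i i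

/-- The optimal (minimum) makespan over all allocations. -/
def OPT {m n : ℕ} (hm : 0 < m) (c : Fin m → Fin n → ℝ) : ℝ :=
  (Finset.univ : Finset (Fin n → Fin m)).inf' ⟨fun _ => ⟨0, hm⟩, Finset.mem_univ _⟩
    fun X => makespan hm c X

/-- The hard instance: jobs `0`, `1` form a two-machine gadget on machines `0`, `1`;
jobs `2 ≤ j < m` are "unit" jobs (cost `3t+1` on machines 0,1; `2t+1` on the rest);
jobs `j ≥ m` are padding with zero cost. -/
def hardC (m n : ℕ) (t : ℝ) : Fin m → Fin n → ℝ := fun i j =>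
  if m ≤ (j : ℕ) then 0
  else if (j : ℕ) = 0 then (if (i : ℕ) = 0 then t else if (i : ℕ) = 1 then 2*t+1 else t+1)
  else if (j : ℕ) = 1 then (if (i : ℕ) = 0 then 2*t+1 else if (i : ℕ) = 1 then 3*t+1 else t+1)
  else if (i : ℕ) ≤ 1 then 3*t+1 else 2*t+1

lemma hardC_nonneg {m n : ℕ} {t : ℝ} (ht : 0 ≤ t) (i : Fin m) (j : Fin n) :
    0 ≤ hardC m n t i j := by
  unfold hardC; split_ifs <;> linarith

lemma hardC_pad {m n : ℕ} {t : ℝ} (i : Fin m) (j : Fin n) (h : m ≤ (j : ℕ)) :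
    hardC m n t i j = 0 := by
  unfold hardC; rw [if_pos h]

lemma hardC_j0 {m n : ℕ} {t : ℝ} (hm : 2 ≤ m) (i : Fin m) (j : Fin n) (h : (j : ℕ) = 0) :
    hardC m n t i j = if (i : ℕ) = 0 then t else if (i : ℕ) = 1 then 2*t+1 else t+1 := by
  unfold hardC; rw [if_neg (by omega), if_pos h]

lemma hardC_j1 {m n : ℕ} {t : ℝ} (hm : 2 ≤ m) (i : Fin m) (j : Fin n) (h : (j : ℕ) = 1) :
    hardC m n t i j = if (i : ℕ) = 0 then 2*t+1 else if (i : ℕ) = 1 then 3*t+1 else t+1 := by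
  unfold hardC; rw [if_neg (by omega), if_neg (by omega), if_pos h]

lemma hardC_unit {m n : ℕ} {t : ℝ} (i : Fin m) (j : Fin n) (h2 : 2 ≤ (j : ℕ))
    (hlt : (j : ℕ) < m) :
    hardC m n t i j = if (i : ℕ) ≤ 1 then 3*t+1 else 2*t+1 := by
  unfold hardC; rw [if_neg (by omega), if_neg (by omega), if_neg (by omega)]

/-- Sum over `Fin n` of a function depending only on which of the four job classes `j` is in. -/
lemma sum_shape (n m : ℕ) (hm : 2 ≤ m) (hn : m ≤ n) (C0 C1 CU : ℝ) :
    ∑ j : Fin n, (if m ≤ (j : ℕ) then 0 else if (j : ℕ) = 0 then C0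
      else if (j : ℕ) = 1 then C1 else CU) = C0 + C1 + ((m : ℝ) - 2) * CU := by
  have key : ∀ k : ℕ, (if m ≤ k then (0:ℝ) else if k = 0 then C0 else if k = 1 then C1 else CU)
      = (if k = 0 then C0 - CU else 0) + (if k = 1 then C1 - CU else 0)
        + (if k < m then CU else 0) := by
    intro k
    by_cases h0 : k = 0
    · subst h0; rw [if_neg (by omega), if_pos rfl, if_pos rfl, if_neg (by omega), if_pos (by omega)]; ring
    · by_cases h1 : k = 1
      · subst h1; rw [if_neg (by omega), if_neg (by omega), if_pos rfl, if_neg (by omega),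
          if_pos rfl, if_pos (by omega)]; ring
      · by_cases hk : k < m
        · rw [if_neg (by omega), if_neg h0, if_neg h1, if_neg h0, if_neg h1, if_pos hk]; ring
        · rw [if_pos (by omega), if_neg h0, if_neg h1, if_neg (by omega)]; ring
  rw [Fin.sum_univ_eq_sum_range (fun k => if m ≤ k then (0:ℝ) else if k = 0 then C0
    else if k = 1 then C1 else CU) n]
  rw [Finset.sum_congr rfl (fun k _ => key k)]
  rw [Finset.sum_add_distrib, Finset.sum_add_distrib]
  rw [Finset.sum_ite_eq' (Finset.range n) 0 (fun _ => C0 - CU),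
      Finset.sum_ite_eq' (Finset.range n) 1 (fun _ => C1 - CU)]
  have hrange : (Finset.range n).filter (fun k => k < m) = Finset.range m := by
    ext k; simp only [Finset.mem_filter, Finset.mem_range]; omega
  rw [← Finset.sum_filter, hrange, Finset.sum_const, Finset.card_range,
      if_pos (Finset.mem_range.mpr (by omega)), if_pos (Finset.mem_range.mpr (by omega))]
  ring

/-- Sum over `Fin m` of a function depending only on whether `i = 0`, `i = 1`, or else. -/
lemma sum_machines (m : ℕ) (hm : 2 ≤ m) (a b d : ℝ) :
    ∑ i : Fin m, (if (i : ℕ) = 0 then a else if (i : ℕ) = 1 then b else d)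
      = a + b + ((m : ℝ) - 2) * d := by
  have key : ∀ k : ℕ, (if k = 0 then a else if k = 1 then b else d)
      = (if k = 0 then a - d else 0) + (if k = 1 then b - d else 0) + d := by
    intro k
    by_cases h0 : k = 0
    · subst h0; rw [if_pos rfl, if_pos rfl, if_neg (by omega)]; ring
    · by_cases h1 : k = 1
      · subst h1; rw [if_neg h0, if_pos rfl, if_neg h0, if_pos rfl]; ring
      · rw [if_neg h0, if_neg h1, if_neg h0, if_neg h1]; ring
  rw [Fin.sum_univ_eq_sum_range (fun k => if k = 0 then a else if k = 1 then b else d) m]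
  rw [Finset.sum_congr rfl (fun k _ => key k)]
  rw [Finset.sum_add_distrib, Finset.sum_add_distrib,
      Finset.sum_ite_eq' (Finset.range m) 0 (fun _ => a - d),
      Finset.sum_ite_eq' (Finset.range m) 1 (fun _ => b - d),
      Finset.sum_const, Finset.card_range,
      if_pos (Finset.mem_range.mpr (by omega)), if_pos (Finset.mem_range.mpr (by omega))]
  ring

lemma hardC_total {m n : ℕ} (t : ℝ) (hm : 2 ≤ m) (hn : m ≤ n) :
    ∑ i : Fin m, ∑ j : Fin n, hardC m n t i j = (m : ℝ)^2 * (2*t+1) - 1 := by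
  rw [Finset.sum_comm]
  have hcol : ∀ j : Fin n, ∑ i : Fin m, hardC m n t i j
      = (if m ≤ (j : ℕ) then 0 else if (j : ℕ) = 0 then (3*t+1 + ((m:ℝ)-2)*(t+1))
        else if (j : ℕ) = 1 then (5*t+2 + ((m:ℝ)-2)*(t+1))
        else (6*t+2 + ((m:ℝ)-2)*(2*t+1))) := by
    intro j
    by_cases hp : m ≤ (j : ℕ)
    · rw [if_pos hp]
      rw [Finset.sum_congr rfl (fun i _ => hardC_pad i j hp)]
      simp
    · rw [if_neg hp]
      by_cases h0 : (j : ℕ) = 0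
      · rw [if_pos h0, Finset.sum_congr rfl (fun i _ => hardC_j0 hm i j h0),
          sum_machines m hm]
        ring
      · rw [if_neg h0]
        by_cases h1 : (j : ℕ) = 1
        · rw [if_pos h1, Finset.sum_congr rfl (fun i _ => hardC_j1 hm i j h1),
            sum_machines m hm]
          ring
        · rw [if_neg h1]
          have h2 : 2 ≤ (j : ℕ) := by omega
          have heq : ∀ i : Fin m, hardC m n t i j
              = (if (i : ℕ) = 0 then 3*t+1 else if (i : ℕ) = 1 then 3*t+1 else 2*t+1) := by
            intro i
            rw [hardC_unit i j h2 (by omega)]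
            by_cases hi0 : (i : ℕ) = 0
            · rw [if_pos (by omega), if_pos hi0]
            · by_cases hi1 : (i : ℕ) = 1
              · rw [if_pos (by omega), if_neg hi0, if_pos hi1]
              · rw [if_neg (by omega), if_neg hi0, if_neg hi1]
          rw [Finset.sum_congr rfl (fun i _ => heq i), sum_machines m hm]
          ring
  rw [Finset.sum_congr rfl (fun j _ => hcol j), sum_shape n m hm hn]
  ring

/-- No proportional mechanism gives a `(3/2 - ε)`-approximation to the optimal makespan. -/
theorem stmt_5 (m n : ℕ) (hm : 2 ≤ m) (hn : m ≤ n) (ε : ℝ) (hε : 0 < ε) :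
    ∃ c : Fin m → Fin n → ℝ, (∀ i j, 0 ≤ c i j) ∧
      ∀ A : Fin n → Fin m,
        (∃ p : Fin m → ℝ, ∀ i : Fin m,
          bundleCost c A i i - p i ≤ (1 / (m : ℝ)) * ∑ k : Fin m, (bundleCost c A i k - p k)) →
        (3 / 2 - ε) * OPT (by omega) c < makespan (by omega) c A := by
  have hm0 : 0 < m := by omega
  have hn0 : 0 < n := by omega
  obtain ⟨t, ht1, hεt⟩ : ∃ t : ℝ, 1 ≤ t ∧ ε * t = 1 + ε := by
    refine ⟨1/ε + 1, ?_, ?_⟩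
    · have : 0 < 1/ε := by positivity
      linarith
    · field_simp
  have ht0 : 0 < t := by linarith
  have hmR : (0:ℝ) < (m:ℝ) := by exact_mod_cast hm0
  refine ⟨hardC m n t, fun i j => hardC_nonneg (le_of_lt ht0) i j, ?_⟩
  intro A hA
  obtain ⟨j0, hj0v⟩ : ∃ j : Fin n, (j : ℕ) = 0 := ⟨⟨0, by omega⟩, rfl⟩
  obtain ⟨j1, hj1v⟩ : ∃ j : Fin n, (j : ℕ) = 1 := ⟨⟨1, by omega⟩, rfl⟩
  -- Step 1: proportionality implies the social-cost bound  S(A) ≤ (1/m) * total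
  obtain ⟨p, hp⟩ := hA
  have hS : ∑ i : Fin m, bundleCost (hardC m n t) A i i
      ≤ (1/(m:ℝ)) * ((m:ℝ)^2 * (2*t+1) - 1) := by
    have hrow : ∀ i : Fin m, ∑ k : Fin m, bundleCost (hardC m n t) A i k
        = ∑ j : Fin n, hardC m n t i j := by
      intro i
      exact Finset.sum_fiberwise Finset.univ A (fun j => hardC m n t i j)
    have hsum := Finset.sum_le_sum (fun i (_ : i ∈ Finset.univ) => hp i)
    rw [Finset.sum_sub_distrib] at hsum
    have hrhs : ∑ i : Fin m, (1/(m:ℝ)) * (∑ k : Fin m, (bundleCost (hardC m n t) A i k - p k))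
        = (1/(m:ℝ)) * ((∑ i : Fin m, ∑ j : Fin n, hardC m n t i j)
            - (m:ℝ) * ∑ k : Fin m, p k) := by
      rw [← Finset.mul_sum]
      congr 1
      have h1 : ∀ i : Fin m, ∑ k : Fin m, (bundleCost (hardC m n t) A i k - p k)
          = (∑ j : Fin n, hardC m n t i j) - ∑ k : Fin m, p k := by
        intro i
        rw [Finset.sum_sub_distrib, hrow i]
      rw [Finset.sum_congr rfl (fun i _ => h1 i), Finset.sum_sub_distrib,
          Finset.sum_const, Finset.card_univ, Fintype.card_fin, nsmul_eq_mul]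
    rw [hrhs, hardC_total t hm hn] at hsum
    have hexp : (1/(m:ℝ)) * (((m:ℝ)^2 * (2*t+1) - 1) - (m:ℝ) * ∑ k : Fin m, p k)
        = (1/(m:ℝ)) * ((m:ℝ)^2 * (2*t+1) - 1) - ∑ k : Fin m, p k := by
      field_simp
    rw [hexp] at hsum
    linarith
  -- makespan bounds from single jobs and pairs of jobs
  have hload : ∀ i : Fin m, bundleCost (hardC m n t) A i i ≤ makespan hm0 (hardC m n t) A :=
    fun i => Finset.le_sup' (fun i => bundleCost (hardC m n t) A i i) (Finset.mem_univ i)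
  have hsingle : ∀ j : Fin n, hardC m n t (A j) j ≤ makespan hm0 (hardC m n t) A := by
    intro j
    refine le_trans ?_ (hload (A j))
    apply Finset.single_le_sum (f := fun j' => hardC m n t (A j) j')
    · exact fun j' _ => hardC_nonneg (le_of_lt ht0) _ _
    · simp
  have hpair : ∀ j j' : Fin n, j ≠ j' → A j = A j' →
      hardC m n t (A j) j + hardC m n t (A j) j' ≤ makespan hm0 (hardC m n t) A := by
    intro j j' hne heq
    refine le_trans ?_ (hload (A j))
    unfold bundleCost
    have hsub : ({j, j'} : Finset (Fin n)) ⊆ Finset.univ.filter (fun x => A x = A j) := by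
      intro x hx
      simp only [Finset.mem_insert, Finset.mem_singleton] at hx
      rcases hx with rfl | rfl
      · simp
      · simp [← heq]
    have := Finset.sum_le_sum_of_subset_of_nonneg hsub
      (fun x _ _ => hardC_nonneg (le_of_lt ht0) (A j) x)
    rwa [Finset.sum_pair hne] at this
  -- Step 2: OPT ≤ 2t+1 via the balanced allocation G
  have hOPT0 : 0 ≤ OPT hm0 (hardC m n t) := by
    apply Finset.le_inf'
    intro X _
    refine le_trans ?_ (Finset.le_sup' (fun i => bundleCost (hardC m n t) X i i)
      (Finset.mem_univ (⟨0, hm0⟩ : Fin m)))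
    exact Finset.sum_nonneg (fun j _ => hardC_nonneg (le_of_lt ht0) _ _)
  have hOPTle : OPT hm0 (hardC m n t) ≤ 2*t+1 := by
    set G : Fin n → Fin m := fun j =>
      if (j : ℕ) = 0 then ⟨1, by omega⟩
      else if h : 2 ≤ (j : ℕ) ∧ (j : ℕ) < m then ⟨(j : ℕ), h.2⟩
      else ⟨0, by omega⟩ with hG_def
    refine le_trans (Finset.inf'_le _ (Finset.mem_univ G)) ?_
    apply Finset.sup'_le
    intro i _
    -- designated job index for machine i
    obtain ⟨d, hd_def⟩ : ∃ d : ℕ, d = if (i : ℕ) = 0 then 1 else if (i : ℕ) = 1 then 0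
        else (i : ℕ) := ⟨_, rfl⟩
    have hdn : d < n := by
      rw [hd_def]; split_ifs <;> omega
    have hpoint : ∀ j : Fin n, G j = i →
        hardC m n t i j ≤ (if (j : ℕ) = d then 2*t+1 else 0) := by
      intro j hji
      by_cases hpad : m ≤ (j : ℕ)
      · rw [hardC_pad i j hpad]
        split_ifs <;> linarith
      · by_cases h0 : (j : ℕ) = 0
        · have hGi : (i : ℕ) = 1 := by
            have hx : G j = ⟨1, by omega⟩ := by simp only [hG_def, if_pos h0]
            rw [hx] at hji; rw [← hji]
          have hd1 : d = 0 := by rw [hd_def, hGi]; norm_num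
          rw [if_pos (by omega), hardC_j0 hm i j h0, if_neg (by omega), if_pos hGi]
        · by_cases h1 : (j : ℕ) = 1
          · have hGi : (i : ℕ) = 0 := by
              have hx : G j = ⟨0, by omega⟩ := by
                simp only [hG_def, if_neg h0]
                rw [dif_neg (by omega)]
              rw [hx] at hji; rw [← hji]
            have hd1 : d = 1 := by rw [hd_def, hGi]; norm_num
            rw [if_pos (by omega), hardC_j1 hm i j h1, if_pos hGi]
          · have h2 : 2 ≤ (j : ℕ) := by omega
            have hGi : (i : ℕ) = (j : ℕ) := by
              have hx : G j = ⟨(j : ℕ), by omega⟩ := by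
                simp only [hG_def, if_neg h0]
                rw [dif_pos ⟨h2, by omega⟩]
              rw [hx] at hji; rw [← hji]
            have hd1 : d = (j : ℕ) := by
              rw [hd_def, hGi]
              rw [if_neg (by omega), if_neg (by omega)]
            rw [if_pos (by omega), hardC_unit i j h2 (by omega), if_neg (by omega)]
    unfold bundleCost
    calc ∑ j ∈ Finset.univ.filter (fun j => G j = i), hardC m n t i j
        ≤ ∑ j ∈ Finset.univ.filter (fun j => G j = i), (if (j : ℕ) = d then 2*t+1 else 0) := by
          apply Finset.sum_le_sum
          intro j hj
          simp only [Finset.mem_filter] at hj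
          exact hpoint j hj.2
      _ ≤ ∑ j : Fin n, (if (j : ℕ) = d then 2*t+1 else 0) := by
          apply Finset.sum_le_sum_of_subset_of_nonneg (Finset.filter_subset _ _)
          intro j _ _
          split_ifs <;> linarith
      _ = 2*t+1 := by
          have hcongr : ∀ j : Fin n, (if (j : ℕ) = d then (2*t+1 : ℝ) else 0)
              = (if j = (⟨d, hdn⟩ : Fin n) then 2*t+1 else 0) := by
            intro j
            congr 1
            simp [Fin.ext_iff]
          rw [Finset.sum_congr rfl (fun j _ => hcongr j),
              Finset.sum_ite_eq' Finset.univ (⟨d, hdn⟩ : Fin n) (fun _ => (2*t+1 : ℝ)),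
              if_pos (Finset.mem_univ _)]
  -- Step 3: reduce to showing makespan ≥ 3t+1
  have hgoal_of : makespan hm0 (hardC m n t) A ≥ 3*t+1 →
      (3/2 - ε) * OPT hm0 (hardC m n t) < makespan hm0 (hardC m n t) A := by
    intro hms
    have hb : (3/2 - ε) * OPT hm0 (hardC m n t) < 3*t+1 := by
      rcases le_or_gt 0 (3/2 - ε) with hpos | hneg
      · have hmul := mul_le_mul_of_nonneg_left hOPTle hpos
        have hx : (3/2 - ε) * (2*t+1) = 3*t + 3/2 - 2*(ε*t) - ε := by ring
        rw [hεt] at hx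
        linarith
      · have : (3/2 - ε) * OPT hm0 (hardC m n t) ≤ 0 :=
          mul_nonpos_of_nonpos_of_nonneg (le_of_lt hneg) hOPT0
        linarith
    linarith
  apply hgoal_of
  -- Step 4: main argument. Suppose makespan < 3t+1; derive a contradiction with hS.
  by_contra hcon
  push_neg at hcon
  have hms : makespan hm0 (hardC m n t) A < 3*t+1 := hcon
  -- every unit job goes to a machine with index ≥ 2
  have hA_unit : ∀ j : Fin n, 2 ≤ (j : ℕ) → (j : ℕ) < m → 2 ≤ ((A j : Fin m) : ℕ) := by
    intro j h2 hlt
    by_contra hle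
    push_neg at hle
    have h := lt_of_le_of_lt (hsingle j) hms
    rw [hardC_unit (A j) j h2 hlt, if_pos (by omega)] at h
    linarith
  -- units map injectively into extra machines; by cardinality, surjectively too
  have hsurj : ∀ e : Fin m, 2 ≤ (e : ℕ) → ∃ u : Fin n,
      (2 ≤ (u : ℕ) ∧ (u : ℕ) < m) ∧ A u = e := by
    set U : Finset (Fin n) := Finset.univ.filter (fun j => 2 ≤ (j : ℕ) ∧ (j : ℕ) < m) with hU_def
    set E : Finset (Fin m) := Finset.univ.filter (fun i => 2 ≤ (i : ℕ)) with hE_def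
    have hUcard : U.card = m - 2 := by
      rw [show (m - 2 : ℕ) = (Finset.Ico 2 m).card by rw [Nat.card_Ico]]
      refine Finset.card_nbij (fun j => (j : ℕ)) ?_ ?_ ?_
      · intro a ha
        simp only [hU_def, Finset.mem_filter] at ha
        simp only [Finset.mem_Ico]
        simp at ha ⊢; omega
      · exact fun a _ b _ h => Fin.val_injective h
      · intro k hk
        simp only [Finset.coe_Ico, Set.mem_Ico] at hk
        refine ⟨⟨k, by omega⟩, ?_, rfl⟩
        simp only [hU_def, Finset.coe_filter, Set.mem_setOf_eq]
        exact ⟨Finset.mem_univ _, hk.1, hk.2⟩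
    have hEcard : E.card = m - 2 := by
      rw [show (m - 2 : ℕ) = (Finset.Ico 2 m).card by rw [Nat.card_Ico]]
      refine Finset.card_nbij (fun i => (i : ℕ)) ?_ ?_ ?_
      · intro a ha
        simp only [hE_def, Finset.mem_filter] at ha
        simp only [Finset.mem_Ico]
        simp at ha ⊢; omega
      · exact fun a _ b _ h => Fin.val_injective h
      · intro k hk
        simp only [Finset.coe_Ico, Set.mem_Ico] at hk
        refine ⟨⟨k, hk.2⟩, ?_, rfl⟩
        simp only [hE_def, Finset.coe_filter, Set.mem_setOf_eq]
        exact ⟨Finset.mem_univ _, hk.1⟩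
    have hmaps : ∀ (a : Fin n) (ha : a ∈ U), A a ∈ E := by
      intro a ha
      simp only [hU_def, Finset.mem_filter] at ha
      simp only [hE_def, Finset.mem_filter]
      exact ⟨Finset.mem_univ _, hA_unit a ha.2.1 ha.2.2⟩
    have hinj : ∀ (a₁ a₂ : Fin n) (ha₁ : a₁ ∈ U) (ha₂ : a₂ ∈ U), A a₁ = A a₂ → a₁ = a₂ := by
      intro a₁ a₂ ha₁ ha₂ heq
      by_contra hne
      simp only [hU_def, Finset.mem_filter] at ha₁ ha₂
      have h := lt_of_le_of_lt (hpair a₁ a₂ hne heq) hms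
      have hv : 2 ≤ ((A a₁ : Fin m) : ℕ) := hA_unit a₁ ha₁.2.1 ha₁.2.2
      rw [hardC_unit (A a₁) a₁ ha₁.2.1 ha₁.2.2, if_neg (by omega),
          hardC_unit (A a₁) a₂ ha₂.2.1 ha₂.2.2, if_neg (by omega)] at h
      linarith
    intro e he
    have hsur := Finset.surj_on_of_inj_on_of_card_le (fun (a : Fin n) (_ : a ∈ U) => A a)
      hmaps hinj (by rw [hUcard, hEcard]) e
      (by simp only [hE_def, Finset.mem_filter]; exact ⟨Finset.mem_univ _, he⟩)
    obtain ⟨u, hu, hue⟩ := hsur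
    simp only [hU_def, Finset.mem_filter] at hu
    exact ⟨u, hu.2, hue.symm⟩
  -- job j1 goes to machine 0
  have hAj1 : ((A j1 : Fin m) : ℕ) = 0 := by
    by_contra h0
    by_cases h1 : ((A j1 : Fin m) : ℕ) = 1
    · have h := lt_of_le_of_lt (hsingle j1) hms
      rw [hardC_j1 hm (A j1) j1 hj1v, if_neg (by omega), if_pos h1] at h
      linarith
    · have h2 : 2 ≤ ((A j1 : Fin m) : ℕ) := by omega
      obtain ⟨u, ⟨hu2, hum⟩, hue⟩ := hsurj (A j1) h2
      have hne : u ≠ j1 := by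
        intro heq
        rw [heq, hj1v] at hu2
        omega
      have h := lt_of_le_of_lt (hpair u j1 hne hue) hms
      rw [hue] at h
      rw [hardC_unit (A j1) u hu2 hum, if_neg (by omega),
          hardC_j1 hm (A j1) j1 hj1v, if_neg (by omega), if_neg (by omega)] at h
      linarith
  -- job j0 goes to machine 1
  have hAj0 : ((A j0 : Fin m) : ℕ) = 1 := by
    by_contra h1
    by_cases h0 : ((A j0 : Fin m) : ℕ) = 0
    · have heq : A j0 = A j1 := Fin.val_injective (by omega)
      have hne : j0 ≠ j1 := by
        intro h
        rw [h, hj1v] at hj0v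
        omega
      have h := lt_of_le_of_lt (hpair j0 j1 hne heq) hms
      rw [hardC_j0 hm (A j0) j0 hj0v, if_pos h0,
          hardC_j1 hm (A j0) j1 hj1v, if_pos h0] at h
      linarith
    · have h2 : 2 ≤ ((A j0 : Fin m) : ℕ) := by omega
      obtain ⟨u, ⟨hu2, hum⟩, hue⟩ := hsurj (A j0) h2
      have hne : u ≠ j0 := by
        intro heq
        rw [heq, hj0v] at hu2
        omega
      have h := lt_of_le_of_lt (hpair u j0 hne hue) hms
      rw [hue] at h
      rw [hardC_unit (A j0) u hu2 hum, if_neg (by omega),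
          hardC_j0 hm (A j0) j0 hj0v, if_neg (by omega), if_neg (by omega)] at h
      linarith
  -- Step 5: lower-bound the social cost:  S(A) = ∑_j c_{A j}(j) ≥ m(2t+1)
  have hSS : ∑ i : Fin m, bundleCost (hardC m n t) A i i
      = ∑ j : Fin n, hardC m n t (A j) j := by
    unfold bundleCost
    rw [← Finset.sum_fiberwise Finset.univ A (fun j => hardC m n t (A j) j)]
    apply Finset.sum_congr rfl
    intro i _
    apply Finset.sum_congr rfl
    intro j hj
    simp only [Finset.mem_filter] at hj
    rw [hj.2]
  have hSlow : (m : ℝ) * (2*t+1) ≤ ∑ j : Fin n, hardC m n t (A j) j := by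
    have hlb : ∀ j : Fin n, (if m ≤ (j : ℕ) then 0 else if (j : ℕ) = 0 then 2*t+1
        else if (j : ℕ) = 1 then 2*t+1 else 2*t+1) ≤ hardC m n t (A j) j := by
      intro j
      by_cases hpad : m ≤ (j : ℕ)
      · rw [if_pos hpad]
        exact hardC_nonneg (le_of_lt ht0) _ _
      · rw [if_neg hpad]
        by_cases h0 : (j : ℕ) = 0
        · have hjj : j = j0 := Fin.val_injective (by omega)
          rw [if_pos h0, hjj, hardC_j0 hm (A j0) j0 hj0v,
              if_neg (by omega), if_pos hAj0]
        · by_cases h1 : (j : ℕ) = 1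
          · have hjj : j = j1 := Fin.val_injective (by omega)
            rw [if_neg h0, if_pos h1, hjj, hardC_j1 hm (A j1) j1 hj1v, if_pos hAj1]
          · have h2 : 2 ≤ (j : ℕ) := by omega
            have hv : 2 ≤ ((A j : Fin m) : ℕ) := hA_unit j h2 (by omega)
            rw [if_neg h0, if_neg h1, hardC_unit (A j) j h2 (by omega), if_neg (by omega)]
    have hsum := Finset.sum_le_sum (fun j (_ : j ∈ Finset.univ) => hlb j)
    rw [sum_shape n m hm hn (2*t+1) (2*t+1) (2*t+1)] at hsum
    linarith
  -- Final contradiction:  m(2t+1) ≤ S(A) ≤ (1/m)(m²(2t+1) − 1) = m(2t+1) − 1/m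
  rw [hSS] at hS
  have hexp2 : (1/(m:ℝ)) * ((m:ℝ)^2 * (2*t+1) - 1) = (m:ℝ) * (2*t+1) - 1/(m:ℝ) := by
    field_simp
  rw [hexp2] at hS
  have hpos : (0:ℝ) < 1/(m:ℝ) := by positivity
  linarith
end
end

section
/- Fix α ∈ (0, 1]. Let c be a job-scheduling instance with m machines and n jobs and let A be an allocation. Then A is α-envy-freeable (i.e., there exist payments p : Fin m → ℝ such that α·c_i(A_i) − p_i ≤ c_i(A_k) − p_k for every pair of machines i, k) if and only if A is α-locally efficient, i.e., for every subset S ⊆ Fin m and every permutation π of S, α·Σ_{i ∈ S} c_i(A_i) ≤ Σ_{i ∈ S} c_i(A_{π(i)}). -/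
open Finset

noncomputable section

section aux

variable {V : Type*} [DecidableEq V] [Inhabited V]

/-- Weight of a path given as a list of vertices. -/
def pw (e : V → V → ℝ) : List V → ℝ
  | [] => 0
  | [_] => 0
  | a :: b :: t => e a b + pw e (b :: t)

lemma pw_cons (e : V → V → ℝ) (a : V) (l : List V) (h : l ≠ []) :
    pw e (a :: l) = e a l.headI + pw e l := by
  cases l with
  | nil => exact absurd rfl h
  | cons b t => rfl

lemma headI_append_of_ne_nil (a : List V) (b : List V) (ha : a ≠ []) :
    (a ++ b).headI = a.headI := by
  cases a with
  | nil => exact absurd rfl ha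
  | cons x t => rfl

lemma pw_concat (e : V → V → ℝ) (x : V) :
    ∀ (a : List V) (ha : a ≠ []), pw e (a ++ [x]) = pw e a + e (a.getLast ha) x := by
  intro a
  induction a with
  | nil => intro h; exact absurd rfl h
  | cons h t ih =>
    intro _
    cases t with
    | nil => simp [pw]
    | cons b t' =>
      have h1 : (h :: b :: t') ++ [x] = h :: ((b :: t') ++ [x]) := rfl
      have h2 : pw e (h :: ((b :: t') ++ [x])) = e h b + pw e ((b :: t') ++ [x]) := rfl
      rw [h1, h2, ih (by simp), pw]
      conv_rhs => rw [List.getLast_cons (by simp : (b :: t') ≠ [])]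
      ring

lemma pw_split (e : V → V → ℝ) (x : V) (b : List V) :
    ∀ (a : List V), pw e (a ++ x :: b) = pw e (a ++ [x]) + pw e (x :: b) := by
  intro a
  induction a with
  | nil => simp [pw]
  | cons h t ih =>
    have h1 : (h :: t) ++ x :: b = h :: (t ++ x :: b) := rfl
    have h2 : (h :: t) ++ [x] = h :: (t ++ [x]) := rfl
    rw [h1, h2, pw_cons e h _ (by simp), pw_cons e h _ (by simp), ih]
    have : (t ++ x :: b).headI = (t ++ [x]).headI := by
      cases t with
      | nil => rfl
      | cons y t' => rfl
    rw [this]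
    ring

lemma sum_nextOr (e : V → V → ℝ) :
    ∀ (t : List V) (a : V) (d : V), (a :: t).Nodup →
      ∑ x ∈ (a :: t).toFinset, e x ((a :: t).nextOr x d)
        = pw e (a :: t) + e ((a :: t).getLast (by simp)) d := by
  intro t
  induction t with
  | nil =>
    intro a d _
    simp [pw]
  | cons b t' ih =>
    intro a d hnd
    have hna : a ∉ (b :: t') := (List.nodup_cons.mp hnd).1
    have hnd' : (b :: t').Nodup := hnd.of_cons
    have hins : (a :: b :: t').toFinset = insert a (b :: t').toFinset := by
      simp [List.toFinset_cons]
    rw [hins, Finset.sum_insert (by simpa using hna)]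
    have hfirst : (a :: b :: t').nextOr a d = b := List.nextOr_self_cons_cons _ _ _ _
    have hrest : ∀ x ∈ (b :: t').toFinset,
        e x ((a :: b :: t').nextOr x d) = e x ((b :: t').nextOr x d) := by
      intro x hx
      have hxa : x ≠ a := by
        rintro rfl
        exact hna (by simpa using hx)
      rw [List.nextOr_cons_of_ne _ _ _ _ hxa]
    rw [Finset.sum_congr rfl hrest, ih b d hnd', hfirst]
    have hlast : (a :: b :: t').getLast (by simp) = (b :: t').getLast (by simp) :=
      List.getLast_cons (by simp)
    rw [hlast, pw]
    ring

end aux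

/-- An allocation is α-envy-freeable iff it is α-locally efficient. -/
theorem stmt_14 (α : ℝ) (hα0 : 0 < α) (hα1 : α ≤ 1) {m n : ℕ} (hm : 2 ≤ m) (hn : 2 ≤ n)
    (c : Fin m → Fin n → ℝ) (hc : ∀ i j, 0 ≤ c i j) (A : Fin n → Fin m) :
    (∃ p : Fin m → ℝ, ∀ i k : Fin m,
        α * bundleCost c A i i - p i ≤ bundleCost c A i k - p k)
    ↔ ∀ (S : Finset (Fin m)) (π : Fin m → Fin m), Set.BijOn π ↑S ↑S →
        α * ∑ i ∈ S, bundleCost c A i i ≤ ∑ i ∈ S, bundleCost c A i (π i) := by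
  have hbc : ∀ i k, 0 ≤ bundleCost c A i k := fun i k =>
    Finset.sum_nonneg fun j _ => hc i j
  constructor
  · rintro ⟨p, hp⟩ S π hπ
    have hsum : ∑ i ∈ S, (α * bundleCost c A i i - p i)
        ≤ ∑ i ∈ S, (bundleCost c A i (π i) - p (π i)) :=
      Finset.sum_le_sum fun i _ => hp i (π i)
    have hps : ∑ i ∈ S, p (π i) = ∑ i ∈ S, p i := by
      refine Finset.sum_bij (fun a _ => π a) ?_ ?_ ?_ ?_
      · intro a ha; exact hπ.mapsTo (by simpa using ha)
      · intro a ha b hb hab; exact hπ.injOn (by simpa using ha) (by simpa using hb) hab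
      · intro b hb
        obtain ⟨a, ha, h⟩ := hπ.surjOn (by simpa using hb)
        exact ⟨a, by simpa using ha, h⟩
      · intro a _; rfl
    rw [Finset.sum_sub_distrib, Finset.sum_sub_distrib, hps] at hsum
    rw [Finset.mul_sum]
    linarith
  · intro h
    haveI : Inhabited (Fin m) := ⟨⟨0, by omega⟩⟩
    set e : Fin m → Fin m → ℝ :=
      fun i k => α * bundleCost c A i i - bundleCost c A i k with he
    -- every simple cycle has nonpositive e-weight
    have hcyc : ∀ (L : List (Fin m)), L.Nodup → ∀ hne : L ≠ [],
        pw e L + e (L.getLast hne) L.headI ≤ 0 := by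
      intro L hnd hne
      have hbij : Set.BijOn (⇑L.formPerm) (↑L.toFinset) (↑L.toFinset) := by
        refine ⟨?_, ?_, ?_⟩
        · intro x hx
          simpa using List.formPerm_apply_mem_of_mem (by simpa using hx)
        · exact (Equiv.injective _).injOn
        · intro y hy
          refine ⟨L.formPerm.symm y, ?_, by simp⟩
          have : L.formPerm (L.formPerm.symm y) ∈ L := by simpa using hy
          simpa using List.mem_of_formPerm_apply_mem this
      have hS := h L.toFinset (⇑L.formPerm) hbij
      have hsum0 : ∑ x ∈ L.toFinset, e x (L.formPerm x) ≤ 0 := by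
        have : ∑ x ∈ L.toFinset, e x (L.formPerm x)
            = α * ∑ x ∈ L.toFinset, bundleCost c A x x
              - ∑ x ∈ L.toFinset, bundleCost c A x (L.formPerm x) := by
          rw [Finset.mul_sum, ← Finset.sum_sub_distrib]
        rw [this]
        linarith
      obtain ⟨a, t, rfl⟩ := List.exists_cons_of_ne_nil hne
      have hform : ∀ x ∈ (a :: t).toFinset,
          e x ((a :: t).formPerm x) = e x ((a :: t).nextOr x a) := by
        intro x hx
        have hxm : x ∈ (a :: t) := by simpa using hx
        rw [List.formPerm_apply_mem_eq_next hnd x hxm]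
        rfl
      rw [Finset.sum_congr rfl hform, sum_nextOr e t a a hnd] at hsum0
      simpa using hsum0
    -- candidate paths and payments
    set Cand : Fin m → Set (List (Fin m)) :=
      fun i => {l : List (Fin m) | l.Nodup ∧ l.headI = i ∧ l ≠ []} with hCand
    have hfin : ∀ i, ((pw e) '' (Cand i)).Finite := by
      intro i
      refine Set.Finite.image _ (Set.Finite.subset (List.finite_length_le (Fin m) m) ?_)
      intro l hl
      have : l.length ≤ Fintype.card (Fin m) := hl.1.length_le_card
      simpa using this
    have hne : ∀ i, ((pw e) '' (Cand i)).Nonempty := by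
      intro i
      exact ⟨pw e [i], ⟨[i], ⟨by simp, rfl, by simp⟩, rfl⟩⟩
    set p : Fin m → ℝ := fun i => sSup ((pw e) '' (Cand i)) with hpdef
    have hmem : ∀ i, p i ∈ (pw e) '' (Cand i) := fun i =>
      Set.Nonempty.csSup_mem (hne i) (hfin i)
    have hle : ∀ i (l : List (Fin m)), l ∈ Cand i → pw e l ≤ p i := fun i l hl =>
      le_csSup (hfin i).bddAbove ⟨l, hl, rfl⟩
    refine ⟨p, ?_⟩
    intro i k
    -- goal is equivalent to  p k + e i k ≤ p i
    have key : p k + e i k ≤ p i := by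
      obtain ⟨l, ⟨hnd, hhead, hlne⟩, hpl⟩ := hmem k
      by_cases hik : i = k
      · subst hik
        have : e i i ≤ 0 := by
          have := hbc i i
          simp only [he]
          nlinarith
        linarith
      by_cases hmem2 : i ∈ l
      · obtain ⟨a, b, rfl⟩ := List.append_of_mem hmem2
        have hane : a ≠ [] := by
          rintro rfl
          exact hik (by simpa using hhead)
        have hnda : (i :: a).Nodup := by
          have := hnd
          simp [List.nodup_append] at this
          simp [List.nodup_cons]
          exact ⟨fun hia => (this.2.2 i hia).1 rfl, this.1⟩
        have hndb : (i :: b).Nodup := (List.nodup_append'.mp hnd).2.1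
        have hcyc1 := hcyc (i :: a) hnda (by simp)
        have hheadIa : a.headI = k := by
          rw [← hhead, headI_append_of_ne_nil a _ hane]
        have hgl : (i :: a).getLast (by simp) = a.getLast hane :=
          List.getLast_cons hane
        rw [pw_cons e i a hane, hgl] at hcyc1
        simp only [List.headI_cons] at hcyc1
        rw [hheadIa] at hcyc1
        -- hcyc1 : e i k + pw e a + e (a.getLast hane) i ≤ 0
        have hsplit : pw e (a ++ i :: b) = pw e (a ++ [i]) + pw e (i :: b) :=
          pw_split e i b a
        have hconc : pw e (a ++ [i]) = pw e a + e (a.getLast hane) i :=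
          pw_concat e i a hane
        have hb2 : pw e (i :: b) ≤ p i := hle i (i :: b) ⟨hndb, rfl, by simp⟩
        rw [← hpl, hsplit, hconc]
        linarith
      · have hcand : (i :: l) ∈ Cand i := ⟨by simp [List.nodup_cons, hmem2, hnd], rfl, by simp⟩
        have := hle i (i :: l) hcand
        rw [pw_cons e i l hlne, hhead, hpl] at this
        linarith
    simp only [he] at key
    linarith
end
end
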